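/- Let p/q be an irreducible fraction with 0 < p/q < 1/2. Then the reduced degree sequence of the Haros graph G_{p/q} contains exactly p entries equal to 2, exactly q − 2p entries equal to 3, and no entry equal to 4; equivalently P(2,p/q) = p/q, P(3,p/q) = 1 − 2p/q and P(4,p/q) = 0. -/

import Mathlib

/-- Symbols for paths in the Farey binary tree. -/
inductive LR
  | L
  | R
deriving DecidableEq

/-- One step in the Farey binary tree: update the current pair of fractions
(represented as pairs (numerator, denominator) of naturals). -/
def fareyStep : ((ℕ × ℕ) × (ℕ × ℕ)) → LR → ((ℕ × ℕ) × (ℕ × ℕ))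
  | ((a, b), (c, d)), LR.L => ((a, b), (a + c, b + d))
  | ((a, b), (c, d)), LR.R => ((a + c, b + d), (c, d))

/-- The final pair of fractions of a word: after reading the first symbol `L`
the current pair is (0/1, 1/1); the remaining symbols update it. -/
def finalPair (w : List LR) : (ℕ × ℕ) × (ℕ × ℕ) :=
  w.tail.foldl fareyStep ((0, 1), (1, 1))

/-- The value ⟨w⟩ of a word: the mediant of its final pair, as (numerator, denominator). -/
def value (w : List LR) : ℕ × ℕ :=
  ((finalPair w).1.1 + (finalPair w).2.1, (finalPair w).1.2 + (finalPair w).2.2)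

/-- A word over {L,R} is a Farey word when its first symbol is `L`. -/
def IsFareyWord (w : List LR) : Prop := w.head? = some LR.L

/-- Concatenation of degree sequences:
[a₁,…,a_s] ⊕ [b₁,…,b_t] = [a₁+1, a₂, …, a_{s−1}, a_s+b₁, b₂, …, b_{t−1}, b_t+1]. -/
def oplus (A B : List ℕ) : List ℕ :=
  (A.dropLast.modifyHead (· + 1)) ++ [A.getLastD 0 + B.headD 0] ++ B.tail.dropLast
    ++ [B.getLastD 0 + 1]

/-- Update of the pair (D(left ancestor), D(right ancestor)) of unreduced degree
sequences along one symbol. -/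
def degStep : (List ℕ × List ℕ) → LR → (List ℕ × List ℕ)
  | (A, B), LR.L => (A, oplus A B)
  | (A, B), LR.R => (oplus A B, B)

/-- The pair (D(a/b), D(c/d)) of unreduced degree sequences of the final pair of a word;
0/1 and 1/1 are both assigned the list [1,1]. -/
def degPair (w : List LR) : List ℕ × List ℕ :=
  w.tail.foldl degStep ([1, 1], [1, 1])

/-- The unreduced degree sequence D(⟨w⟩) = D(a/b) ⊕ D(c/d) of the value of a word. -/
def Dseq (w : List LR) : List ℕ :=
  oplus (degPair w).1 (degPair w).2

/-- Reduction: [k₁,…,k_{q+1}] becomes [k₂,…,k_q, k₁+k_{q+1}]; the last entry is the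
boundary degree and the remaining ones are the inner degrees. -/
def reduce (D : List ℕ) : List ℕ :=
  D.tail.dropLast ++ [D.headD 0 + D.getLastD 0]

/-- The reduced degree sequence of the Haros graph G_{⟨w⟩}. -/
def degSeq (w : List LR) : List ℕ := reduce (Dseq w)

/-- Degree-distribution entropy S of the Haros graph G_{⟨w⟩}:
S = −Σ_k P(k)·ln P(k), summed over the degree values occurring in the reduced
degree sequence, where P(k) = m(k)/q. -/
noncomputable def Sent (w : List LR) : ℝ :=
  -∑ k ∈ (degSeq w).toFinset,
    (((degSeq w).count k : ℝ) / ((value w).2 : ℝ)) *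
      Real.log (((degSeq w).count k : ℝ) / ((value w).2 : ℝ))

/-- Reduced entropy H of the Haros graph G_{⟨w⟩} (with the convention 0·ln 0 = 0,
automatic since Real.log 0 = 0). -/
noncomputable def Hent (w : List LR) : ℝ :=
  let x : ℝ := ((value w).1 : ℝ) / ((value w).2 : ℝ)
  if x ≤ 1 / 2 then
    Sent w + 2 * x * Real.log x + (1 - 2 * x) * Real.log (1 - 2 * x)
  else
    Sent w + 2 * (1 - x) * Real.log (1 - x) + (2 * x - 1) * Real.log (2 * x - 1)

/-! Along the Farey path of `p/q < 1/2`, which starts with `LL`, the left ancestor is either `0/1`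
or has a degree sequence ending in an entry `≥ 3`, and the right ancestor has a degree sequence
with both end entries `≥ 2`. Writing a sequence as `x :: (M ++ [y])`, the operation `⊕` glues the
interiors `M` around the new entry `y_A + x_B ≥ 5`; when the left ancestor is `0/1` it inserts a `3`
instead, and then the numerator is unchanged while the denominator grows by one. Hence the numbers
of interior entries `2` and `3` behave additively like `p` and `q - 2p`, no interior entry is `4`,
and the boundary degree `x + y` of the result is at least `5`. -/

def LowDegCounts (p q : ℕ) (M : List ℕ) : Prop :=
  M.count 2 = p ∧ q = 2 * p + M.count 3 ∧ M.count 4 = 0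

namespace LowDegCounts

theorem append {a b c d : ℕ} {M N : List ℕ} (hM : LowDegCounts a b M) (hN : LowDegCounts c d N) :
    LowDegCounts (a + c) (b + d) (M ++ N) := by
  obtain ⟨hM2, hM3, hM4⟩ := hM
  obtain ⟨hN2, hN3, hN4⟩ := hN
  simp only [LowDegCounts, List.count_append]
  omega

theorem singleton_of_five_le {x : ℕ} (hx : 5 ≤ x) : LowDegCounts 0 0 [x] := by
  refine ⟨?_, ?_, ?_⟩ <;> simp only [List.count_singleton'] <;> split_ifs <;> omega

theorem three : LowDegCounts 0 1 [3] :=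
  ⟨rfl, rfl, rfl⟩

end LowDegCounts

theorem oplus_cons_append (xA : ℕ) (MA : List ℕ) (yA xB : ℕ) (MB : List ℕ) (yB : ℕ) :
    oplus (xA :: (MA ++ [yA])) (xB :: (MB ++ [yB])) =
      (xA + 1) :: (MA ++ (yA + xB) :: MB ++ [yB + 1]) := by
  rw [← List.cons_append, ← List.cons_append, oplus, List.dropLast_concat, List.getLastD_concat,
    List.getLastD_concat]
  simp

theorem reduce_cons_append (x : ℕ) (M : List ℕ) (y : ℕ) :
    reduce (x :: (M ++ [y])) = M ++ [x + y] := by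
  rw [← List.cons_append, reduce, List.getLastD_concat]
  simp

/-- Invariant along a Farey path below `1/2`: `st` is the current pair of fractions and `ds` the
pair of their unreduced degree sequences. -/
def SpineInv (st : (ℕ × ℕ) × (ℕ × ℕ)) (ds : List ℕ × List ℕ) : Prop :=
  ((ds.1 = [1, 1] ∧ st.1 = (0, 1) ∧ ds.2.headD 0 = 2) ∨
    ∃ xA MA yA, ds.1 = xA :: (MA ++ [yA]) ∧ 2 ≤ xA ∧ 3 ≤ yA ∧ LowDegCounts st.1.1 st.1.2 MA) ∧
  ∃ xB MB yB, ds.2 = xB :: (MB ++ [yB]) ∧ 2 ≤ xB ∧ 2 ≤ yB ∧ LowDegCounts st.2.1 st.2.2 MB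

namespace SpineInv

theorem init : SpineInv ((0, 1), (1, 2)) ([1, 1], [2, 2, 2]) :=
  ⟨Or.inl ⟨rfl, rfl, rfl⟩, 2, [2], 2, rfl, le_rfl, le_rfl, rfl, rfl, rfl⟩

theorem oplus_shape {st : (ℕ × ℕ) × (ℕ × ℕ)} {ds : List ℕ × List ℕ} (hinv : SpineInv st ds) :
    ∃ x M y, oplus ds.1 ds.2 = x :: (M ++ [y]) ∧ 2 ≤ x ∧ 3 ≤ y ∧
      LowDegCounts (st.1.1 + st.2.1) (st.1.2 + st.2.2) M := by
  obtain ⟨⟨a, b⟩, ⟨c, d⟩⟩ := st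
  obtain ⟨A, B⟩ := ds
  obtain ⟨hA, xB, MB, yB, rfl, hxB, hyB, hMB⟩ := hinv
  rcases hA with ⟨rfl, hab, hxB2⟩ | ⟨xA, MA, yA, rfl, hxA, hyA, hMA⟩
  · obtain ⟨rfl, rfl⟩ := Prod.mk.inj hab
    obtain rfl : xB = 2 := hxB2
    refine ⟨2, 3 :: MB, yB + 1, oplus_cons_append 1 [] 1 2 MB yB, le_rfl, by omega, ?_⟩
    simpa [Nat.add_comm 1 d] using LowDegCounts.three.append hMB
  · refine ⟨xA + 1, MA ++ (yA + xB) :: MB, yB + 1, by simp [oplus_cons_append], by omega,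
      by omega, ?_⟩
    simpa using (hMA.append (LowDegCounts.singleton_of_five_le (by omega))).append hMB

theorem step {st : (ℕ × ℕ) × (ℕ × ℕ)} {ds : List ℕ × List ℕ} (hinv : SpineInv st ds) (s : LR) :
    SpineInv (fareyStep st s) (degStep ds s) := by
  obtain ⟨⟨a, b⟩, ⟨c, d⟩⟩ := st
  obtain ⟨A, B⟩ := ds
  obtain ⟨x, M, y, hD, hx, hy, hM⟩ := hinv.oplus_shape
  obtain ⟨hA, hB⟩ := hinv
  cases s with
  | L =>
    refine ⟨?_, x, M, y, hD, hx, by omega, hM⟩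
    rcases hA with ⟨rfl, hab, -⟩ | hA
    · exact Or.inl ⟨rfl, hab, rfl⟩
    · exact Or.inr hA
  | R => exact ⟨Or.inr ⟨x, M, y, hD, hx, hy, hM⟩, hB⟩

end SpineInv

theorem foldl_fareyStep_le_two_mul (u : List LR) {st : (ℕ × ℕ) × (ℕ × ℕ)}
    (h : st.1.2 ≤ 2 * st.1.1 ∧ st.2.2 ≤ 2 * st.2.1) :
    (u.foldl fareyStep st).1.2 ≤ 2 * (u.foldl fareyStep st).1.1 ∧
      (u.foldl fareyStep st).2.2 ≤ 2 * (u.foldl fareyStep st).2.1 := by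
  refine List.foldlRecOn (motive := fun st => st.1.2 ≤ 2 * st.1.1 ∧ st.2.2 ≤ 2 * st.2.1)
    u fareyStep h ?_
  rintro ⟨⟨a, b⟩, ⟨c, d⟩⟩ ⟨hab, hcd⟩ (_ | _) - <;> simp only [fareyStep] at * <;> omega

theorem eq_L_L_cons_of_value {w : List LR} {p q : ℕ} (hw : IsFareyWord w)
    (hval : value w = (p, q)) (hq : 2 * p < q) : ∃ u, w = LR.L :: LR.L :: u := by
  obtain ⟨_ | _, rfl⟩ := List.head?_eq_some_iff.mp hw
  · simp only [value, finalPair, List.tail_cons, List.foldl_nil, Prod.mk.injEq] at hval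
    omega
  case cons s u =>
    cases s with
    | L => exact ⟨u, rfl⟩
    | R =>
      have := foldl_fareyStep_le_two_mul u (st := ((1, 2), (1, 1))) (by decide)
      simp only [value, finalPair, List.tail_cons, List.foldl_cons, fareyStep, Nat.reduceAdd,
        Prod.mk.injEq] at hval
      omega

theorem statement0_general (p q : ℕ) (hq : 2 * p < q)
    (w : List LR) (hw : IsFareyWord w) (hval : value w = (p, q)) :
    (degSeq w).count 2 = p ∧ (degSeq w).count 3 = q - 2 * p ∧ (degSeq w).count 4 = 0 := by
  obtain ⟨u, rfl⟩ := eq_L_L_cons_of_value hw hval hq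
  have hinv : SpineInv (u.foldl fareyStep ((0, 1), (1, 2)))
      (u.foldl degStep ([1, 1], [2, 2, 2])) :=
    List.foldl_rel SpineInv.init fun s _ _ _ h => h.step s
  obtain ⟨x, M, y, hD, hx, hy, hM⟩ := hinv.oplus_shape
  have hdeg : degSeq (LR.L :: LR.L :: u) = M ++ [x + y] := by
    rw [degSeq, Dseq, ← reduce_cons_append, ← hD]
    rfl
  have hpq : (p, q) = value (LR.L :: LR.L :: u) := hval.symm
  obtain ⟨hc2, hc3, hc4⟩ := hM.append (LowDegCounts.singleton_of_five_le (by omega : 5 ≤ x + y))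
  simp only [value, finalPair, List.tail_cons, List.foldl_cons, fareyStep, Nat.reduceAdd,
    Prod.mk.injEq] at hpq
  rw [hdeg]
  omega

/-- for an irreducible fraction p/q with 0 < p/q < 1/2, the reduced degree
sequence of the Haros graph G_{p/q} has exactly p entries equal to 2, exactly q − 2p
entries equal to 3, and no entry equal to 4. -/
theorem statement0 (p q : ℕ) (hcop : Nat.Coprime p q) (hp : 0 < p) (hq : 2 * p < q)
    (w : List LR) (hw : IsFareyWord w) (hval : value w = (p, q)) :
    (degSeq w).count 2 = p ∧ (degSeq w).count 3 = q - 2 * p ∧ (degSeq w).count 4 = 0 :=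
  statement0_general p q hq w hw hval
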